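/- arXiv:2605.23608 — 3 statements merged into one kernel-verified Lean document; each statement's English description precedes it below -/
import Mathlib

section
/- Assume the Kalman condition holds and that R₃(τ) is invertible for every τ ∈ (0,T]. Then there exists ε ∈ (0,T] such that R₁(τ) is invertible for all τ ∈ [0,ε]; moreover the matrix W(τ) := R₃(τ)R₁(τ)⁻¹ is symmetric for every τ ∈ [0,ε], and W(τ) is positive definite for every τ ∈ (0,ε]. -/
/-!
The flow `S τ = exp (-τ Ω H)` is symplectic, `Sᵀ Ω S = Ω`, because `Ω H` is Hamiltonian for
symmetric `H`; the upper-left block of this identity reads `R₁ᵀ R₃ = R₃ᵀ R₁`. Hence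
`W = R₃ R₁⁻¹ = R₁⁻ᵀ (R₁ᵀ R₃) R₁⁻¹` is symmetric wherever `R₁` is invertible, which holds near
`τ = 0` since `R₁ 0 = 1`, and `W` is positive definite as soon as `R₁ᵀ R₃` is.

For `y ≠ 0` put `p = R₁ y`, `q = R₃ y`. They solve `p' = -Aᵀp - Qq`, `q' = Aq + BBᵀp` with
`p 0 = y`, `q 0 = 0`, and `(p ⬝ q)' = |Bᵀp|² - q ⬝ Qq`. Duhamel's formula and Cauchy–Schwarz give
`|q s|² ≤ C s ∫₀ˢ |Bᵀp|²`, hence `yᵀ R₁ᵀ R₃ y = p τ ⬝ q τ ≥ (1 - K τ²) ∫₀^τ |Bᵀp|²`. The integral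
vanishes only if `Bᵀp ≡ 0` on `[0, τ]`; then `q ≡ 0`, so `p' = -Aᵀp` and differentiating
`Bᵀ (Aᵀ)ᵏ p` repeatedly makes `y` orthogonal to every `Aʲ bᵢ`, i.e. `y = 0` by the Kalman condition.
-/

open Matrix MeasureTheory Filter Topology

noncomputable section

namespace LQ

variable {n m : ℕ}

def Om (n : ℕ) : Matrix (Fin n ⊕ Fin n) (Fin n ⊕ Fin n) ℝ :=
  Matrix.fromBlocks 0 1 (-1) 0

def Ham (A Q : Matrix (Fin n) (Fin n) ℝ) (B : Matrix (Fin n) (Fin m) ℝ) :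
    Matrix (Fin n ⊕ Fin n) (Fin n ⊕ Fin n) ℝ :=
  Matrix.fromBlocks (B * Bᵀ) A Aᵀ Q

def flow (A Q : Matrix (Fin n) (Fin n) ℝ) (B : Matrix (Fin n) (Fin m) ℝ) (τ : ℝ) :
    Matrix (Fin n ⊕ Fin n) (Fin n ⊕ Fin n) ℝ :=
  NormedSpace.exp ((-τ) • (Om n * Ham A Q B))

def R1 (A Q : Matrix (Fin n) (Fin n) ℝ) (B : Matrix (Fin n) (Fin m) ℝ) (τ : ℝ) :
    Matrix (Fin n) (Fin n) ℝ := (flow A Q B τ).toBlocks₁₁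

def R2 (A Q : Matrix (Fin n) (Fin n) ℝ) (B : Matrix (Fin n) (Fin m) ℝ) (τ : ℝ) :
    Matrix (Fin n) (Fin n) ℝ := (flow A Q B τ).toBlocks₁₂

def R3 (A Q : Matrix (Fin n) (Fin n) ℝ) (B : Matrix (Fin n) (Fin m) ℝ) (τ : ℝ) :
    Matrix (Fin n) (Fin n) ℝ := (flow A Q B τ).toBlocks₂₁

def R4 (A Q : Matrix (Fin n) (Fin n) ℝ) (B : Matrix (Fin n) (Fin m) ℝ) (τ : ℝ) :
    Matrix (Fin n) (Fin n) ℝ := (flow A Q B τ).toBlocks₂₂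

def Kalman (A : Matrix (Fin n) (Fin n) ℝ) (B : Matrix (Fin n) (Fin m) ℝ) : Prop :=
  Submodule.span ℝ
    {v : Fin n → ℝ | ∃ j : Fin n, ∃ i : Fin m, v = (A ^ (j : ℕ)).mulVec (Bᵀ i)} = ⊤

end LQ

namespace Matrix

variable {ι κ : Type*} [Fintype ι] [Fintype κ]

theorem transpose_exp_mul_mul_exp_of_mul_eq [DecidableEq ι] {J X : Matrix ι ι ℝ}
    (h : J * X = -Xᵀ * J) :
    (NormedSpace.exp X)ᵀ * J * NormedSpace.exp X = J := by
  have key : NormedSpace.exp (- -Xᵀ) * J * NormedSpace.exp X = J :=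
    open scoped Norms.Operator in SemiconjBy.exp_neg_mul_mul_exp_eq_self h
  rwa [neg_neg, exp_transpose] at key

theorem mul_nonsing_inv_eq_transpose_mul_mul [DecidableEq ι] {P R : Matrix ι ι ℝ} (hP : IsUnit P) :
    R * P⁻¹ = (P⁻¹)ᵀ * (Pᵀ * R) * P⁻¹ := by
  rw [← Matrix.mul_assoc, ← transpose_mul, mul_nonsing_inv _ ((isUnit_iff_isUnit_det P).1 hP),
    transpose_one, Matrix.one_mul]

theorem IsSymm.mul_nonsing_inv [DecidableEq ι] {P R : Matrix ι ι ℝ} (h : (Pᵀ * R).IsSymm)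
    (hP : IsUnit P) :
    (R * P⁻¹).IsSymm := by
  rw [mul_nonsing_inv_eq_transpose_mul_mul hP, IsSymm, transpose_mul, transpose_mul,
    transpose_transpose, h.eq]
  exact (Matrix.mul_assoc _ _ _).symm

theorem PosDef.mul_nonsing_inv [DecidableEq ι] {P R : Matrix ι ι ℝ} (h : (Pᵀ * R).PosDef)
    (hP : IsUnit P) :
    (R * P⁻¹).PosDef := by
  rw [mul_nonsing_inv_eq_transpose_mul_mul hP, ← conjTranspose_eq_transpose_of_trivial]
  exact h.conjTranspose_mul_mul_same (mulVec_injective_iff_isUnit.2 (isUnit_nonsing_inv_iff.2 hP))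

theorem abs_dotProduct_le (a b : ι → ℝ) :
    |a ⬝ᵥ b| ≤ Fintype.card ι * ‖a‖ * ‖b‖ :=
  calc |a ⬝ᵥ b| ≤ ∑ i, |a i| * |b i| := by
        simpa only [dotProduct, abs_mul] using Finset.abs_sum_le_sum_abs (fun i => a i * b i) _
    _ ≤ ∑ _i : ι, ‖a‖ * ‖b‖ := Finset.sum_le_sum fun i _ =>
        mul_le_mul (norm_le_pi_norm a i) (norm_le_pi_norm b i) (abs_nonneg _) (norm_nonneg _)
    _ = Fintype.card ι * ‖a‖ * ‖b‖ := by simp [mul_assoc]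

theorem sq_norm_le_dotProduct_self (a : ι → ℝ) : ‖a‖ ^ 2 ≤ a ⬝ᵥ a := by
  have hsqrt : ‖a‖ ≤ √(a ⬝ᵥ a) := (pi_norm_le_iff_of_nonneg (Real.sqrt_nonneg _)).2 fun i =>
    Real.abs_le_sqrt (Finset.single_le_sum (f := fun j => a j * a j) (fun j _ => mul_self_nonneg _)
      (Finset.mem_univ i) |>.trans_eq' (sq (a i)).symm)
  calc ‖a‖ ^ 2 ≤ √(a ⬝ᵥ a) ^ 2 := pow_le_pow_left₀ (norm_nonneg a) hsqrt 2
    _ = a ⬝ᵥ a := Real.sq_sqrt (Finset.sum_nonneg fun i _ => mul_self_nonneg (a i))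

section Calculus

open scoped Norms.Operator

def mulVecCLM : Matrix ι κ ℝ →L[ℝ] (κ → ℝ) →L[ℝ] ι → ℝ :=
  (mulVecBilin ℝ ℝ).mkContinuous₂ 1 fun M v => by
    rw [one_mul]; exact linfty_opNorm_mulVec M v

@[simp] theorem mulVecCLM_apply (M : Matrix ι κ ℝ) (v : κ → ℝ) : mulVecCLM M v = M *ᵥ v := rfl

theorem _root_.HasDerivAt.matrix_mulVec {M : ℝ → Matrix ι κ ℝ} {M' : Matrix ι κ ℝ}
    {c : ℝ → κ → ℝ} {c' : κ → ℝ} {t : ℝ} (hM : HasDerivAt M M' t) (hc : HasDerivAt c c' t) :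
    HasDerivAt (fun s => M s *ᵥ c s) (M' *ᵥ c t + M t *ᵥ c') t := by
  have h1 : HasDerivAt (fun s => mulVecCLM (M s)) (mulVecCLM M') t :=
    mulVecCLM.hasFDerivAt.comp_hasDerivAt t hM
  have h := h1.clm_apply hc
  simp only [mulVecCLM_apply] at h
  exact h

theorem hasDerivAt_exp_smul_mulVec [DecidableEq ι] (N : Matrix ι ι ℝ) {c : ℝ → ι → ℝ}
    {c' : ι → ℝ} {t : ℝ} (hc : HasDerivAt c c' t) :
    HasDerivAt (fun s => NormedSpace.exp (s • N) *ᵥ c s)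
      (N *ᵥ (NormedSpace.exp (t • N) *ᵥ c t) + NormedSpace.exp (t • N) *ᵥ c') t := by
  rw [mulVec_mulVec]
  exact (hasDerivAt_exp_smul_const' N t).matrix_mulVec hc

theorem _root_.HasDerivAt.dotProduct {f g : ℝ → ι → ℝ} {f' g' : ι → ℝ}
    {t : ℝ} (hf : HasDerivAt f f' t) (hg : HasDerivAt g g' t) :
    HasDerivAt (fun s => f s ⬝ᵥ g s) (f' ⬝ᵥ g t + f t ⬝ᵥ g') t := by
  have h := HasDerivAt.fun_sum (u := Finset.univ) fun i _ =>
    (hasDerivAt_pi.1 hf i).fun_mul (hasDerivAt_pi.1 hg i)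
  exact h.congr_deriv Finset.sum_add_distrib

theorem eq_exp_smul_mulVec_integral_of_hasDerivAt [DecidableEq ι] (N : Matrix ι ι ℝ)
    {q g : ℝ → ι → ℝ} (hq : ∀ s, HasDerivAt q (N *ᵥ q s + g s) s)
    (hg : Continuous g) (hq0 : q 0 = 0) (s : ℝ) :
    q s = NormedSpace.exp (s • N) *ᵥ ∫ r in (0:ℝ)..s, NormedSpace.exp ((-r) • N) *ᵥ g r := by
  have hw : ∀ r, HasDerivAt (fun r => NormedSpace.exp ((-r) • N) *ᵥ q r)
      (NormedSpace.exp ((-r) • N) *ᵥ g r) r := by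
    intro r
    have hcomm : N * NormedSpace.exp ((-r) • N) = NormedSpace.exp ((-r) • N) * N :=
      ((Commute.refl N).smul_right (-r)).exp_right.eq
    simp only [neg_smul, ← smul_neg] at hcomm ⊢
    refine (hasDerivAt_exp_smul_mulVec (-N) (hq r)).congr_deriv ?_
    rw [mulVec_add, mulVec_mulVec, mulVec_mulVec, neg_mul, hcomm, neg_mulVec]
    abel
  have hcont : Continuous fun r => NormedSpace.exp ((-r) • N) *ᵥ g r :=
    (NormedSpace.exp_continuous.comp (continuous_neg.smul continuous_const)).matrix_mulVec hg
  rw [intervalIntegral.integral_eq_sub_of_hasDerivAt (fun r _ => hw r)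
    (hcont.intervalIntegrable 0 s), hq0, mulVec_zero, sub_zero, mulVec_mulVec,
    ← exp_add_of_commute _ _ ((Commute.refl N).smul_left s |>.smul_right (-s)), ← add_smul,
    add_neg_cancel, zero_smul, NormedSpace.exp_zero, one_mulVec]

end Calculus

end Matrix

theorem eqOn_zero_of_hasDerivAt_of_eqOn_zero {E : Type*} [NormedAddCommGroup E] [NormedSpace ℝ E]
    {g g' : ℝ → E} {a b : ℝ} (hab : a < b) (hg : ∀ t ∈ Set.Icc a b, HasDerivAt g (g' t) t)
    (h0 : Set.EqOn g 0 (Set.Icc a b)) : Set.EqOn g' 0 (Set.Icc a b) := fun t ht =>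
  (uniqueDiffOn_Icc hab t ht).eq_deriv _
    ((hg t ht).hasDerivWithinAt.congr (fun _ hx => (h0 hx).symm) (h0 ht).symm)
    (hasDerivWithinAt_const t _ 0)

theorem sq_integral_le_mul_integral_sq {F : ℝ → ℝ} (hF : Continuous F) {s : ℝ} (hs : 0 ≤ s) :
    (∫ r in (0:ℝ)..s, F r) ^ 2 ≤ s * ∫ r in (0:ℝ)..s, F r ^ 2 := by
  set I₁ := ∫ r in (0:ℝ)..s, F r
  set I₂ := ∫ r in (0:ℝ)..s, F r ^ 2
  have hexpand : ∫ r in (0:ℝ)..s, (s * F r - I₁) ^ 2 = s * (s * I₂ - I₁ ^ 2) := by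
    have h : ∀ r, (s * F r - I₁) ^ 2 = s ^ 2 * F r ^ 2 - 2 * s * I₁ * F r + I₁ ^ 2 := fun r => by
      ring
    simp only [h]
    rw [intervalIntegral.integral_add, intervalIntegral.integral_sub,
      intervalIntegral.integral_const_mul, intervalIntegral.integral_const_mul,
      intervalIntegral.integral_const]
    · simp only [sub_zero, smul_eq_mul]; ring
    all_goals exact Continuous.intervalIntegrable (by fun_prop) _ _
  have hnonneg : 0 ≤ s * (s * I₂ - I₁ ^ 2) :=
    hexpand ▸ intervalIntegral.integral_nonneg hs fun r _ => sq_nonneg _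
  rcases hs.eq_or_lt with rfl | hs
  · simp [I₁, I₂]
  · have := nonneg_of_mul_nonneg_right hnonneg hs
    linarith

theorem eqOn_zero_of_integral_sq_eq_zero {F : ℝ → ℝ} (hF : Continuous F) {τ : ℝ} (hτ : 0 < τ)
    (h : ∫ r in (0:ℝ)..τ, F r ^ 2 = 0) : Set.EqOn F 0 (Set.Icc 0 τ) := by
  have hG : Set.EqOn (fun t => ∫ r in (0:ℝ)..t, F r ^ 2) 0 (Set.Icc 0 τ) := fun t ht =>
    le_antisymm
      ((intervalIntegral.integral_mono_interval le_rfl ht.1 ht.2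
        (ae_of_all _ fun r => sq_nonneg (F r)) ((hF.pow 2).intervalIntegrable 0 τ)).trans h.le)
      (intervalIntegral.integral_nonneg ht.1 fun _ _ => sq_nonneg _)
  have hF2 := eqOn_zero_of_hasDerivAt_of_eqOn_zero hτ
    (fun t _ => ((hF.pow 2).integral_hasStrictDerivAt 0 t).hasDerivAt) hG
  exact fun t ht => pow_eq_zero_iff two_ne_zero |>.mp (hF2 ht)

namespace LQ

theorem Kalman.eq_zero_of_forall_mulVec_eq_zero {n m : ℕ} {A : Matrix (Fin n) (Fin n) ℝ}
    {B : Matrix (Fin n) (Fin m) ℝ} (hKal : Kalman A B) {y : Fin n → ℝ}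
    (h : ∀ k : ℕ, (Bᵀ * Aᵀ ^ k) *ᵥ y = 0) : y = 0 := by
  have horth : ∀ v ∈ Submodule.span ℝ
      {v : Fin n → ℝ | ∃ j : Fin n, ∃ i : Fin m, v = (A ^ (j : ℕ)).mulVec (Bᵀ i)}, v ⬝ᵥ y = 0 := by
    intro v hv
    induction hv using Submodule.span_induction with
    | mem v hv =>
      obtain ⟨j, i, rfl⟩ := hv
      rw [← vecMul_transpose, ← dotProduct_mulVec, transpose_pow]
      exact congrFun (mulVec_mulVec y Bᵀ (Aᵀ ^ (j : ℕ)) ▸ h j) i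
    | zero => exact zero_dotProduct y
    | add u w _ _ hu hw => rw [add_dotProduct, hu, hw, add_zero]
    | smul a u _ hu => rw [smul_dotProduct, hu, smul_zero]
  exact dotProduct_self_eq_zero.1 (horth y (hKal ▸ Submodule.mem_top))

section

open scoped Matrix.Norms.Operator

variable {n m : ℕ} (A Q : Matrix (Fin n) (Fin n) ℝ) (B : Matrix (Fin n) (Fin m) ℝ)

theorem Om_mul_Om : Om n * Om n = -1 := by
  simp [Om, fromBlocks_multiply, ← fromBlocks_one, fromBlocks_neg]

theorem Om_transpose : (Om n)ᵀ = -Om n := by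
  simp [Om, fromBlocks_transpose, fromBlocks_neg]

theorem Ham_isSymm (hQ : Q.IsSymm) : (Ham A Q B).IsSymm := by
  simp [Ham, IsSymm, fromBlocks_transpose, transpose_mul, hQ.eq]

theorem flow_transpose_mul_Om_mul_flow (hQ : Q.IsSymm) (τ : ℝ) :
    (flow A Q B τ)ᵀ * Om n * flow A Q B τ = Om n := by
  refine transpose_exp_mul_mul_exp_of_mul_eq ?_
  rw [transpose_smul, transpose_mul, Om_transpose, (Ham_isSymm A Q B hQ).eq, Matrix.mul_smul,
    ← Matrix.mul_assoc, Om_mul_Om]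
  simp only [neg_mul, Matrix.smul_mul, Matrix.mul_assoc, mul_neg, Om_mul_Om]
  simp

theorem R1_transpose_mul_R3_isSymm (hQ : Q.IsSymm) (τ : ℝ) :
    ((R1 A Q B τ)ᵀ * R3 A Q B τ).IsSymm := by
  have h := congrArg toBlocks₁₁ (flow_transpose_mul_Om_mul_flow A Q B hQ τ)
  rw [← fromBlocks_toBlocks (flow A Q B τ), Om] at h
  simp only [fromBlocks_transpose, fromBlocks_multiply, toBlocks_fromBlocks₁₁, mul_zero, mul_neg,
    mul_one, zero_add, neg_mul, add_zero] at h
  rw [IsSymm, transpose_mul, transpose_transpose]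
  exact neg_add_eq_zero.1 h

def hamiltonianField : Matrix (Fin n ⊕ Fin n) (Fin n ⊕ Fin n) ℝ :=
  fromBlocks (-Aᵀ) (-Q) (B * Bᵀ) A

theorem flow_eq_exp (τ : ℝ) : flow A Q B τ = NormedSpace.exp (τ • hamiltonianField A Q B) := by
  rw [flow, neg_smul, ← smul_neg]
  congr 2
  simp [hamiltonianField, Om, Ham, fromBlocks_multiply, fromBlocks_neg]

theorem flow_zero : flow A Q B 0 = 1 := by
  rw [flow_eq_exp, zero_smul, NormedSpace.exp_zero]

theorem R1_zero : R1 A Q B 0 = 1 := by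
  rw [R1, flow_zero, ← fromBlocks_one, toBlocks_fromBlocks₁₁]

theorem R3_zero : R3 A Q B 0 = 0 := by
  rw [R3, flow_zero, ← fromBlocks_one, toBlocks_fromBlocks₂₁]

theorem continuous_R1 : Continuous (R1 A Q B) := by
  have hflow : Continuous (flow A Q B) :=
    NormedSpace.exp_continuous.comp (continuous_id.neg.smul continuous_const)
  exact hflow.matrix_submatrix Sum.inl Sum.inl

theorem exists_forall_Icc_isUnit_R1 : ∃ ε > 0, ∀ τ ∈ Set.Icc 0 ε, IsUnit (R1 A Q B τ) := by
  have hdet : Continuous fun τ => (R1 A Q B τ).det := (continuous_R1 A Q B).matrix_det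
  have h0 : (R1 A Q B 0).det ≠ 0 := by simp [R1_zero]
  obtain ⟨δ, hδ, hne⟩ := Metric.eventually_nhds_iff.1 (hdet.continuousAt.eventually_ne h0)
  refine ⟨δ / 2, half_pos hδ, fun τ hτ => (isUnit_iff_isUnit_det _).2 (isUnit_iff_ne_zero.2 ?_)⟩
  refine hne ?_
  rw [Real.dist_eq, sub_zero, abs_of_nonneg hτ.1]
  linarith [hτ.2]

section Trajectory

variable (y : Fin n → ℝ)

def costate (s : ℝ) : Fin n → ℝ := R1 A Q B s *ᵥ y

def state (s : ℝ) : Fin n → ℝ := R3 A Q B s *ᵥ y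

def control (s : ℝ) : Fin m → ℝ := Bᵀ *ᵥ costate A Q B y s

theorem flow_mulVec_elim_zero (s : ℝ) :
    flow A Q B s *ᵥ Sum.elim y 0 = Sum.elim (costate A Q B y s) (state A Q B y s) := by
  rw [← fromBlocks_toBlocks (flow A Q B s), fromBlocks_mulVec]
  simp [costate, state, R1, R3]

theorem hasDerivAt_costate_state (t : ℝ) :
    HasDerivAt (fun s => Sum.elim (costate A Q B y s) (state A Q B y s))
      (Sum.elim (-(Aᵀ *ᵥ costate A Q B y t) - Q *ᵥ state A Q B y t)
        (B *ᵥ control A Q B y t + A *ᵥ state A Q B y t)) t := by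
  have h := hasDerivAt_exp_smul_mulVec (hamiltonianField A Q B) (hasDerivAt_const t (Sum.elim y 0))
  simp only [← flow_eq_exp, flow_mulVec_elim_zero, mulVec_zero, add_zero] at h
  convert h using 1
  rw [hamiltonianField, fromBlocks_mulVec]
  simp [control, mulVec_mulVec, neg_mulVec, sub_eq_add_neg]

theorem hasDerivAt_costate (t : ℝ) :
    HasDerivAt (costate A Q B y) (-(Aᵀ *ᵥ costate A Q B y t) - Q *ᵥ state A Q B y t) t :=
  hasDerivAt_pi.2 fun i => hasDerivAt_pi.1 (hasDerivAt_costate_state A Q B y t) (Sum.inl i)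

theorem hasDerivAt_state (t : ℝ) :
    HasDerivAt (state A Q B y) (B *ᵥ control A Q B y t + A *ᵥ state A Q B y t) t :=
  hasDerivAt_pi.2 fun i => hasDerivAt_pi.1 (hasDerivAt_costate_state A Q B y t) (Sum.inr i)

theorem continuous_costate : Continuous (costate A Q B y) :=
  continuous_iff_continuousAt.2 fun t => (hasDerivAt_costate A Q B y t).continuousAt

theorem continuous_state : Continuous (state A Q B y) :=
  continuous_iff_continuousAt.2 fun t => (hasDerivAt_state A Q B y t).continuousAt

theorem continuous_control : Continuous (control A Q B y) :=
  continuous_const.matrix_mulVec (continuous_costate A Q B y)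

theorem costate_zero : costate A Q B y 0 = y := by
  rw [costate, R1_zero, one_mulVec]

theorem state_zero : state A Q B y 0 = 0 := by
  rw [state, R3_zero, zero_mulVec]

theorem costate_dotProduct_state (τ : ℝ) :
    costate A Q B y τ ⬝ᵥ state A Q B y τ =
      ∫ s in (0:ℝ)..τ, (control A Q B y s ⬝ᵥ control A Q B y s -
        state A Q B y s ⬝ᵥ Q *ᵥ state A Q B y s) := by
  have hderiv : ∀ s, HasDerivAt (fun s => costate A Q B y s ⬝ᵥ state A Q B y s)
      (control A Q B y s ⬝ᵥ control A Q B y s - state A Q B y s ⬝ᵥ Q *ᵥ state A Q B y s) s := by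
    intro s
    refine ((hasDerivAt_costate A Q B y s).dotProduct (hasDerivAt_state A Q B y s)).congr_deriv ?_
    rw [control, sub_dotProduct, neg_dotProduct, dotProduct_add, mulVec_transpose,
      ← dotProduct_mulVec, dotProduct_mulVec _ B, ← mulVec_transpose, dotProduct_comm (Q *ᵥ _)]
    ring
  have hcont : Continuous fun s =>
      control A Q B y s ⬝ᵥ control A Q B y s - state A Q B y s ⬝ᵥ Q *ᵥ state A Q B y s :=
    ((continuous_control A Q B y).dotProduct (continuous_control A Q B y)).sub
      ((continuous_state A Q B y).dotProduct
        (continuous_const.matrix_mulVec (continuous_state A Q B y)))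
  rw [intervalIntegral.integral_eq_sub_of_hasDerivAt (fun s _ => hderiv s)
    (hcont.intervalIntegrable 0 τ), state_zero, dotProduct_zero, sub_zero]

theorem state_eq_exp_smul_mulVec_integral (s : ℝ) :
    state A Q B y s = NormedSpace.exp (s • A) *ᵥ
      ∫ r in (0:ℝ)..s, NormedSpace.exp ((-r) • A) *ᵥ (B *ᵥ control A Q B y r) :=
  eq_exp_smul_mulVec_integral_of_hasDerivAt A
    (fun s => (hasDerivAt_state A Q B y s).congr_deriv (add_comm _ _))
    (continuous_const.matrix_mulVec (continuous_control A Q B y)) (state_zero A Q B y) s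

end Trajectory

theorem exists_norm_state_le : ∃ C, 0 ≤ C ∧ ∀ (y : Fin n → ℝ), ∀ s ∈ Set.Icc (0:ℝ) 1,
    ‖state A Q B y s‖ ≤ C * ∫ r in (0:ℝ)..s, ‖control A Q B y r‖ := by
  obtain ⟨C₀, hC₀⟩ := (isCompact_Icc (a := (-1 : ℝ)) (b := 1)).exists_bound_of_continuousOn
    (NormedSpace.exp_continuous.comp (continuous_id.smul (continuous_const (y := A)))).continuousOn
  have hC₀0 : 0 ≤ C₀ := (norm_nonneg _).trans (hC₀ 0 ⟨by norm_num, by norm_num⟩)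
  refine ⟨C₀ * (C₀ * ‖B‖), by positivity, fun y s hs => ?_⟩
  have hintegrand : ∀ r ∈ Set.Ioc 0 s,
      ‖NormedSpace.exp ((-r) • A) *ᵥ (B *ᵥ control A Q B y r)‖ ≤
        C₀ * ‖B‖ * ‖control A Q B y r‖ := fun r hr =>
    calc _ ≤ ‖NormedSpace.exp ((-r) • A)‖ * (‖B‖ * ‖control A Q B y r‖) :=
          (linfty_opNorm_mulVec _ _).trans (mul_le_mul_of_nonneg_left (linfty_opNorm_mulVec _ _)
            (norm_nonneg _))
      _ ≤ C₀ * (‖B‖ * ‖control A Q B y r‖) :=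
          mul_le_mul_of_nonneg_right (hC₀ _ ⟨by linarith [hr.2, hs.2], by linarith [hr.1]⟩)
            (by positivity)
      _ = _ := by ring
  rw [state_eq_exp_smul_mulVec_integral]
  calc _ ≤ C₀ * ‖∫ r in (0:ℝ)..s, NormedSpace.exp ((-r) • A) *ᵥ (B *ᵥ control A Q B y r)‖ :=
        (linfty_opNorm_mulVec _ _).trans (mul_le_mul_of_nonneg_right
          (hC₀ s ⟨by linarith [hs.1], hs.2⟩) (norm_nonneg _))
    _ ≤ C₀ * ∫ r in (0:ℝ)..s, C₀ * ‖B‖ * ‖control A Q B y r‖ :=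
        mul_le_mul_of_nonneg_left (intervalIntegral.norm_integral_le_of_norm_le hs.1
          (ae_of_all _ hintegrand)
          ((continuous_const.mul (continuous_control A Q B y).norm).intervalIntegrable _ _)) hC₀0
    _ = _ := by rw [intervalIntegral.integral_const_mul]; ring

theorem exists_abs_state_dotProduct_le : ∃ K, 0 ≤ K ∧ ∀ (y : Fin n → ℝ) (τ : ℝ), τ ≤ 1 →
    ∀ s ∈ Set.Icc 0 τ, |state A Q B y s ⬝ᵥ Q *ᵥ state A Q B y s| ≤
      K * τ * ∫ r in (0:ℝ)..τ, ‖control A Q B y r‖ ^ 2 := by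
  obtain ⟨C, hC0, hC⟩ := exists_norm_state_le A Q B
  refine ⟨n * ‖Q‖ * C ^ 2, by positivity, fun y τ hτ s hs => ?_⟩
  set F := fun r => ‖control A Q B y r‖
  have hF : Continuous F := (continuous_control A Q B y).norm
  have hI : ∫ r in (0:ℝ)..s, F r ^ 2 ≤ ∫ r in (0:ℝ)..τ, F r ^ 2 :=
    intervalIntegral.integral_mono_interval le_rfl hs.1 hs.2 (ae_of_all _ fun r => sq_nonneg (F r))
      ((hF.pow 2).intervalIntegrable 0 τ)
  have hstate : ‖state A Q B y s‖ ^ 2 ≤ C ^ 2 * (s * ∫ r in (0:ℝ)..s, F r ^ 2) := by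
    calc ‖state A Q B y s‖ ^ 2 ≤ (C * ∫ r in (0:ℝ)..s, F r) ^ 2 :=
          pow_le_pow_left₀ (norm_nonneg _) (hC y s ⟨hs.1, hs.2.trans hτ⟩) 2
      _ = C ^ 2 * (∫ r in (0:ℝ)..s, F r) ^ 2 := by ring
      _ ≤ C ^ 2 * (s * ∫ r in (0:ℝ)..s, F r ^ 2) :=
          mul_le_mul_of_nonneg_left (sq_integral_le_mul_integral_sq hF hs.1) (by positivity)
  calc |state A Q B y s ⬝ᵥ Q *ᵥ state A Q B y s|
      ≤ n * ‖state A Q B y s‖ * (‖Q‖ * ‖state A Q B y s‖) := by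
        simpa using (abs_dotProduct_le _ _).trans (mul_le_mul_of_nonneg_left
          (linfty_opNorm_mulVec Q _) (by positivity))
    _ = n * ‖Q‖ * ‖state A Q B y s‖ ^ 2 := by ring
    _ ≤ n * ‖Q‖ * (C ^ 2 * (τ * ∫ r in (0:ℝ)..τ, F r ^ 2)) := by
        refine mul_le_mul_of_nonneg_left (hstate.trans ?_) (by positivity)
        exact mul_le_mul_of_nonneg_left (mul_le_mul hs.2 hI
          (intervalIntegral.integral_nonneg hs.1 fun r _ => sq_nonneg _) (hs.1.trans hs.2))
          (by positivity)
    _ = _ := by ring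

theorem exists_mul_integral_norm_control_sq_le :
    ∃ K, 0 ≤ K ∧ ∀ (y : Fin n → ℝ), ∀ τ ∈ Set.Icc (0:ℝ) 1,
    (1 - K * τ ^ 2) * ∫ r in (0:ℝ)..τ, ‖control A Q B y r‖ ^ 2 ≤
      costate A Q B y τ ⬝ᵥ state A Q B y τ := by
  obtain ⟨K, hK0, hK⟩ := exists_abs_state_dotProduct_le A Q B
  refine ⟨K, hK0, fun y τ hτ => ?_⟩
  set I := ∫ r in (0:ℝ)..τ, ‖control A Q B y r‖ ^ 2
  have hF : Continuous fun r => ‖control A Q B y r‖ := (continuous_control A Q B y).norm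
  have hpointwise : ∀ s ∈ Set.Icc 0 τ, ‖control A Q B y s‖ ^ 2 - K * τ * I ≤
      control A Q B y s ⬝ᵥ control A Q B y s - state A Q B y s ⬝ᵥ Q *ᵥ state A Q B y s :=
    fun s hs => sub_le_sub (sq_norm_le_dotProduct_self _) (le_of_abs_le (hK y τ hτ.2 s hs))
  rw [costate_dotProduct_state]
  calc (1 - K * τ ^ 2) * I = ∫ s in (0:ℝ)..τ, (‖control A Q B y s‖ ^ 2 - K * τ * I) := by
        rw [intervalIntegral.integral_sub (f := fun s => ‖control A Q B y s‖ ^ 2)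
          ((hF.pow 2).intervalIntegrable 0 τ)
          intervalIntegrable_const, intervalIntegral.integral_const, smul_eq_mul, sub_zero]
        ring
    _ ≤ _ := intervalIntegral.integral_mono_on hτ.1
        (((hF.pow 2).sub continuous_const).intervalIntegrable 0 τ)
        (Continuous.intervalIntegrable (by
          have := continuous_control A Q B y; have := continuous_state A Q B y; fun_prop) 0 τ)
        hpointwise

theorem eq_zero_of_control_eqOn_zero (hKal : Kalman A B) {y : Fin n → ℝ} {τ : ℝ} (hτ : 0 < τ)
    (h : Set.EqOn (control A Q B y) 0 (Set.Icc 0 τ)) : y = 0 := by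
  have hstate : Set.EqOn (state A Q B y) 0 (Set.Icc 0 τ) := fun s hs => by
    rw [state_eq_exp_smul_mulVec_integral, intervalIntegral.integral_congr (g := 0) fun r hr => ?_]
    · simp
    · rw [Set.uIcc_of_le hs.1] at hr
      simp [h ⟨hr.1, hr.2.trans hs.2⟩]
  have hk : ∀ k : ℕ, Set.EqOn (fun s => (Bᵀ * Aᵀ ^ k) *ᵥ costate A Q B y s) 0 (Set.Icc 0 τ) := by
    intro k
    induction k with
    | zero => rw [pow_zero, Matrix.mul_one]; exact h
    | succ k ih =>
      have hderiv := eqOn_zero_of_hasDerivAt_of_eqOn_zero hτ (fun t _ =>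
        (hasDerivAt_const t (Bᵀ * Aᵀ ^ k)).matrix_mulVec (hasDerivAt_costate A Q B y t)) ih
      intro s hs
      have := hderiv hs
      simp only [zero_mulVec, zero_add, hstate hs, Pi.zero_apply, mulVec_zero, sub_zero, mulVec_neg,
        neg_eq_zero, mulVec_mulVec, Matrix.mul_assoc, ← pow_succ] at this
      exact this
  exact hKal.eq_zero_of_forall_mulVec_eq_zero fun k => by
    simpa [costate_zero] using hk k ⟨le_rfl, hτ.le⟩

theorem exists_forall_Ioc_posDef_R1_transpose_mul_R3 (hQ : Q.IsSymm) (hKal : Kalman A B) :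
    ∃ ε > 0, ∀ τ ∈ Set.Ioc 0 ε, ((R1 A Q B τ)ᵀ * R3 A Q B τ).PosDef := by
  obtain ⟨K, hK0, hK⟩ := exists_mul_integral_norm_control_sq_le A Q B
  refine ⟨1 / (K + 1), by positivity, fun τ hτ => ?_⟩
  have hKτ : (K + 1) * τ ≤ 1 := (le_div_iff₀' (by positivity)).1 hτ.2
  have hτ1 : τ ≤ 1 := by nlinarith [hτ.1]
  have hfactor : 0 < 1 - K * τ ^ 2 := by nlinarith [hτ.1]
  refine posDef_iff_dotProduct_mulVec.2
    ⟨isHermitian_iff_isSymm.2 (R1_transpose_mul_R3_isSymm A Q B hQ τ), fun y hy => ?_⟩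
  rw [star_trivial, ← mulVec_mulVec, dotProduct_mulVec, vecMul_transpose]
  have hF : Continuous fun r => ‖control A Q B y r‖ := (continuous_control A Q B y).norm
  have hI : 0 < ∫ r in (0:ℝ)..τ, ‖control A Q B y r‖ ^ 2 :=
    (intervalIntegral.integral_nonneg hτ.1.le fun r _ => sq_nonneg _).lt_of_ne fun h0 =>
      hy (eq_zero_of_control_eqOn_zero A Q B hKal hτ.1 fun s hs =>
        norm_eq_zero.1 (eqOn_zero_of_integral_sq_eq_zero hF hτ.1 h0.symm hs))
  exact (mul_pos hfactor hI).trans_le (hK y τ ⟨hτ.1.le, hτ1⟩)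

end

theorem W_matrix_general
    {n m : ℕ}
    (A Q : Matrix (Fin n) (Fin n) ℝ) (B : Matrix (Fin n) (Fin m) ℝ)
    (hQ : Q.IsSymm)
    (T : ℝ) (hT : 0 < T) (hKal : Kalman A B) :
    ∃ ε : ℝ, ε ∈ Set.Ioc 0 T ∧
      (∀ τ ∈ Set.Icc (0:ℝ) ε, IsUnit (R1 A Q B τ)) ∧
      (∀ τ ∈ Set.Icc (0:ℝ) ε, (R3 A Q B τ * (R1 A Q B τ)⁻¹).IsSymm) ∧
      (∀ τ ∈ Set.Ioc (0:ℝ) ε, (R3 A Q B τ * (R1 A Q B τ)⁻¹).PosDef) := by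
  obtain ⟨ε₁, hε₁, hR1⟩ := exists_forall_Icc_isUnit_R1 A Q B
  obtain ⟨ε₂, hε₂, hpos⟩ := exists_forall_Ioc_posDef_R1_transpose_mul_R3 A Q B hQ hKal
  set ε := min T (min ε₁ ε₂)
  have hεε₁ : ε ≤ ε₁ := (min_le_right _ _).trans (min_le_left _ _)
  have hεε₂ : ε ≤ ε₂ := (min_le_right _ _).trans (min_le_right _ _)
  have hR1ε : ∀ τ ∈ Set.Icc 0 ε, IsUnit (R1 A Q B τ) := fun τ hτ => hR1 τ ⟨hτ.1, hτ.2.trans hεε₁⟩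
  refine ⟨ε, ⟨lt_min hT (lt_min hε₁ hε₂), min_le_left _ _⟩, hR1ε, fun τ hτ => ?_, fun τ hτ => ?_⟩
  · exact IsSymm.mul_nonsing_inv (R1_transpose_mul_R3_isSymm A Q B hQ τ) (hR1ε τ hτ)
  · exact PosDef.mul_nonsing_inv (hpos τ ⟨hτ.1, hτ.2.trans hεε₂⟩) (hR1ε τ ⟨hτ.1.le, hτ.2⟩)

/-- The `W` matrix: there exists `ε ∈ (0,T]` such that `R₁(τ)` is invertible on `[0,ε]`,
and `W(τ) = R₃(τ)R₁(τ)⁻¹` is symmetric on `[0,ε]` and positive definite on `(0,ε]`. -/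
theorem W_matrix
    {n m : ℕ} (hm : 1 ≤ m) (hmn : m ≤ n)
    (A Q : Matrix (Fin n) (Fin n) ℝ) (B : Matrix (Fin n) (Fin m) ℝ)
    (hQ : Q.IsSymm) (hB : B.rank = m)
    (T : ℝ) (hT : 0 < T) (hKal : Kalman A B)
    (hR3 : ∀ τ ∈ Set.Ioc 0 T, IsUnit (R3 A Q B τ)) :
    ∃ ε : ℝ, ε ∈ Set.Ioc 0 T ∧
      (∀ τ ∈ Set.Icc (0:ℝ) ε, IsUnit (R1 A Q B τ)) ∧
      (∀ τ ∈ Set.Icc (0:ℝ) ε, (R3 A Q B τ * (R1 A Q B τ)⁻¹).IsSymm) ∧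
      (∀ τ ∈ Set.Ioc (0:ℝ) ε, (R3 A Q B τ * (R1 A Q B τ)⁻¹).PosDef) :=
  W_matrix_general A Q B hQ T hT hKal

end LQ
end
end

section
/- Distortion coefficients of the LQ problem: assume the Kalman condition holds and that R₃(τ) is invertible for every τ ∈ (0,T]. For x ∈ ℝⁿ and τ ∈ [0,T] let Φ_{τ,x}(z) = R₃(τ)R₃(T)⁻¹ z + (R₄(τ) − R₃(τ)R₃(T)⁻¹R₄(T)) x be the map sending y to the τ-intermediate point of the unique optimal trajectory from x to y, and for a set F ⊂ ℝⁿ let Z_τ(x,F) = Φ_{τ,x}(F). Then for every x, y ∈ ℝⁿ, every r > 0 and every τ ∈ [0,T]: Leb(Z_τ(x,B_r(y))) = (det R₃(τ)/det R₃(T)) · Leb(B_r(y)); consequently the distortion coefficient β_τ(x,y) := limsup_{r→0⁺} Leb(Z_τ(x,B_r(y)))/Leb(B_r(y)) equals det R₃(τ)/det R₃(T), is independent of x and y, and is strictly positive for τ ∈ (0,T]. Moreover the backwards problem (with A replaced by −A) has the same distortion coefficients: det(−R₃(−τ))/det(−R₃(−T)) = det R₃(τ)/det R₃(T). -/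
/-!
Since `H` is symmetric, `ΩH` is a Hamiltonian matrix, so conjugation by `Ω` turns the transpose
of its flow into the flow run backwards: `e^{τΩH} = Ω (e^{-τΩH})ᵀ Ω⁻¹`. The lower-left block of
this identity is `R₃(-τ) = -R₃(τ)ᵀ`, which gives the claim about the backwards problem.

The map `Φ_{τ,x}` is affine with linear part `R₃(τ)R₃(T)⁻¹`, so it multiplies Lebesgue measure
by `|det R₃(τ) / det R₃(T)|` and the ratio inside the limsup does not depend on `r`. The absolute
value can be dropped: `det R₃` is continuous and vanishes nowhere on `(0, T]`, so by the
intermediate value theorem it has constant sign there, and the ratio stays nonnegative on the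
closure `[0, T]`.
-/

open Matrix MeasureTheory Filter Topology

noncomputable section

namespace LQ

variable {n m : ℕ}

/-- The Euclidean ball in `Fin n → ℝ`. -/
def Eball (y : Fin n → ℝ) (r : ℝ) : Set (Fin n → ℝ) :=
  {z | ∑ i, (z i - y i)^2 < r^2}

lemma _root_.IsPreconnected.div_pos_of_ne_zero {X : Type*} [TopologicalSpace X] {s : Set X}
    (hs : IsPreconnected s) {f : X → ℝ} (hf : ContinuousOn f s) (hf0 : ∀ x ∈ s, f x ≠ 0)
    {a b : X} (ha : a ∈ s) (hb : b ∈ s) : 0 < f a / f b := by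
  rcases (hf0 a ha).lt_or_gt with hfa | hfa <;> rcases (hf0 b hb).lt_or_gt with hfb | hfb
  · exact div_pos_of_neg_of_neg hfa hfb
  · obtain ⟨c, hc, hfc⟩ := hs.intermediate_value ha hb hf ⟨hfa.le, hfb.le⟩
    exact absurd hfc (hf0 c hc)
  · obtain ⟨c, hc, hfc⟩ := hs.intermediate_value hb ha hf ⟨hfb.le, hfa.le⟩
    exact absurd hfc (hf0 c hc)
  · exact div_pos hfa hfb

lemma volume_image_mulVec_add {ι : Type*} [Fintype ι] [DecidableEq ι] (M : Matrix ι ι ℝ)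
    (v : ι → ℝ) (s : Set (ι → ℝ)) :
    volume ((fun z => M *ᵥ z + v) '' s) = ENNReal.ofReal |M.det| * volume s := by
  rw [← Set.image_image (· + v) (M *ᵥ ·), Set.image_add_right, measure_preimage_add_right]
  exact (Measure.addHaar_image_linearMap volume (toLin' M) s).trans (by rw [LinearMap.det_toLin'])

lemma limsup_div_eq_of_eventually_eq_mul {α : Type*} {l : Filter α} [l.NeBot]
    {f g : α → ENNReal} {c : ENNReal}
    (h : ∀ᶠ a in l, f a = c * g a ∧ g a ≠ 0 ∧ g a ≠ ⊤) : limsup (fun a => f a / g a) l = c := by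
  refine (limsup_congr ?_).trans (limsup_const c)
  filter_upwards [h] with a ⟨hfg, hg0, hgtop⟩
  rw [hfg, mul_div_assoc, ENNReal.div_self hg0 hgtop, mul_one]

lemma isOpen_Eball (y : Fin n → ℝ) (r : ℝ) : IsOpen (Eball y r) :=
  isOpen_lt (continuous_finsetSum _ fun i _ => ((continuous_apply i).sub continuous_const).pow 2)
    continuous_const

lemma volume_Eball_pos (y : Fin n → ℝ) {r : ℝ} (hr : 0 < r) : 0 < volume (Eball y r) :=
  (isOpen_Eball y r).measure_pos volume ⟨y, by simpa [Eball] using pow_pos hr 2⟩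

lemma Eball_subset_ball (y : Fin n → ℝ) {r : ℝ} (hr : 0 < r) : Eball y r ⊆ Metric.ball y r := by
  intro z hz
  rw [Metric.mem_ball, dist_pi_lt_iff hr]
  intro i
  have hi : (z i - y i) ^ 2 < r ^ 2 :=
    (Finset.single_le_sum (fun j _ => sq_nonneg (z j - y j)) (Finset.mem_univ i)).trans_lt hz
  simpa [Real.dist_eq] using abs_lt_of_sq_lt_sq hi hr.le

lemma volume_Eball_lt_top (y : Fin n → ℝ) {r : ℝ} (hr : 0 < r) : volume (Eball y r) < ⊤ :=
  (measure_mono (Eball_subset_ball y hr)).trans_lt measure_ball_lt_top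

lemma om_mul_self (n : ℕ) : Om n * Om n = -1 := by
  simp [Om, fromBlocks_multiply, ← fromBlocks_one, fromBlocks_neg]

lemma om_inv (n : ℕ) : (Om n)⁻¹ = -Om n :=
  inv_eq_right_inv (by rw [mul_neg, om_mul_self, neg_neg])

lemma isUnit_om (n : ℕ) : IsUnit (Om n) :=
  (isUnit_iff_isUnit_det _).mpr (isUnit_det_of_right_inverse (B := -Om n)
    (by rw [mul_neg, om_mul_self, neg_neg]))

lemma om_transpose (n : ℕ) : (Om n)ᵀ = -Om n := by
  simp [Om, fromBlocks_transpose, fromBlocks_neg]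

lemma ham_isSymm (A Q : Matrix (Fin n) (Fin n) ℝ) (B : Matrix (Fin n) (Fin m) ℝ)
    (hQ : Q.IsSymm) : (Ham A Q B).IsSymm :=
  IsSymm.fromBlocks (by simp [IsSymm, transpose_mul]) rfl hQ

lemma exp_neg_smul_om_mul {H : Matrix (Fin n ⊕ Fin n) (Fin n ⊕ Fin n) ℝ} (hH : H.IsSymm)
    (s : ℝ) :
    NormedSpace.exp ((-s) • (Om n * H)) =
      Om n * (NormedSpace.exp (s • (Om n * H)))ᵀ * (Om n)⁻¹ := by
  have hconj : Om n * (s • (Om n * H))ᵀ * (Om n)⁻¹ = (-s) • (Om n * H) := by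
    rw [om_inv, transpose_smul, transpose_mul, hH.eq, om_transpose, Matrix.mul_smul,
      Matrix.smul_mul]
    simp only [mul_neg, neg_mul, neg_neg, mul_assoc, om_mul_self, mul_one, neg_smul, smul_neg]
  rw [← exp_transpose, ← exp_conj _ _ (isUnit_om n), hconj]

section Flow

variable (A Q : Matrix (Fin n) (Fin n) ℝ) (B : Matrix (Fin n) (Fin m) ℝ)

lemma R3_neg (hQ : Q.IsSymm) (t : ℝ) : R3 A Q B (-t) = -(R3 A Q B t)ᵀ := by
  have hflow : flow A Q B (-t) = Om n * (flow A Q B t)ᵀ * (Om n)⁻¹ :=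
    exp_neg_smul_om_mul (ham_isSymm A Q B hQ) (-t)
  rw [R3, hflow, om_inv, ← fromBlocks_toBlocks (flow A Q B t), fromBlocks_transpose, Om]
  simp [fromBlocks_multiply, fromBlocks_neg, R3]

lemma continuous_flow : Continuous (flow A Q B) := by
  let : NormedRing (Matrix (Fin n ⊕ Fin n) (Fin n ⊕ Fin n) ℝ) := Matrix.linftyOpNormedRing
  let : NormedAlgebra ℝ (Matrix (Fin n ⊕ Fin n) (Fin n ⊕ Fin n) ℝ) :=
    Matrix.linftyOpNormedAlgebra
  let : NormedAlgebra ℚ (Matrix (Fin n ⊕ Fin n) (Fin n ⊕ Fin n) ℝ) :=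
    NormedAlgebra.restrictScalars ℚ ℝ _
  exact NormedSpace.exp_continuous.comp (continuous_neg.smul continuous_const)

lemma continuous_R3 : Continuous (R3 A Q B) :=
  continuous_matrix fun i j =>
    (continuous_apply_apply (Sum.inr i) (Sum.inl j)).comp (continuous_flow A Q B)

lemma det_R3_div_pos {T : ℝ} (hR3 : ∀ τ ∈ Set.Ioc 0 T, IsUnit (R3 A Q B τ)) {τ : ℝ}
    (hτ : τ ∈ Set.Ioc 0 T) : 0 < (R3 A Q B τ).det / (R3 A Q B T).det :=
  isPreconnected_Ioc.div_pos_of_ne_zero (continuous_R3 A Q B).matrix_det.continuousOn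
    (fun t ht => ((isUnit_iff_isUnit_det _).mp (hR3 t ht)).ne_zero) hτ
    ⟨hτ.1.trans_le hτ.2, le_rfl⟩

lemma det_R3_div_nonneg {T : ℝ} (hT : 0 < T) (hR3 : ∀ τ ∈ Set.Ioc 0 T, IsUnit (R3 A Q B τ))
    {τ : ℝ} (hτ : τ ∈ Set.Icc 0 T) : 0 ≤ (R3 A Q B τ).det / (R3 A Q B T).det := by
  have hclosed : IsClosed {t | 0 ≤ (R3 A Q B t).det / (R3 A Q B T).det} :=
    isClosed_le continuous_const ((continuous_R3 A Q B).matrix_det.div_const _)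
  rw [← closure_Ioc hT.ne] at hτ
  exact (hclosed.closure_subset_iff.mpr fun t ht => (det_R3_div_pos A Q B hR3 ht).le) hτ

end Flow

theorem distortion_coefficients_general
    {n m : ℕ}
    (A Q : Matrix (Fin n) (Fin n) ℝ) (B : Matrix (Fin n) (Fin m) ℝ)
    (hQ : Q.IsSymm)
    (T : ℝ) (hT : 0 < T)
    (hR3 : ∀ τ ∈ Set.Ioc 0 T, IsUnit (R3 A Q B τ))
    (x y : Fin n → ℝ) (τ : ℝ) (hτ : τ ∈ Set.Icc 0 T) :
    letI Φ : (Fin n → ℝ) → Fin n → ℝ := fun z =>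
      (R3 A Q B τ * (R3 A Q B T)⁻¹).mulVec z +
        (R4 A Q B τ - R3 A Q B τ * (R3 A Q B T)⁻¹ * R4 A Q B T).mulVec x
    (∀ r : ℝ, 0 < r →
      volume (Φ '' Eball y r) =
        ENNReal.ofReal ((R3 A Q B τ).det / (R3 A Q B T).det) * volume (Eball y r)) ∧
    (Filter.limsup (fun r : ℝ => volume (Φ '' Eball y r) / volume (Eball y r))
        (𝓝[>] (0:ℝ)) =
      ENNReal.ofReal ((R3 A Q B τ).det / (R3 A Q B T).det)) ∧
    (0 < τ → 0 < (R3 A Q B τ).det / (R3 A Q B T).det) ∧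
    ((-(R3 A Q B (-τ))).det / (-(R3 A Q B (-T))).det
      = (R3 A Q B τ).det / (R3 A Q B T).det) := by
  have hdet : (R3 A Q B τ * (R3 A Q B T)⁻¹).det = (R3 A Q B τ).det / (R3 A Q B T).det := by
    rw [det_mul, det_nonsing_inv, Ring.inverse_eq_inv', div_eq_mul_inv]
  have hvolume : ∀ r : ℝ, 0 < r → volume ((fun z => (R3 A Q B τ * (R3 A Q B T)⁻¹) *ᵥ z +
        (R4 A Q B τ - R3 A Q B τ * (R3 A Q B T)⁻¹ * R4 A Q B T) *ᵥ x) '' Eball y r) =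
      ENNReal.ofReal ((R3 A Q B τ).det / (R3 A Q B T).det) * volume (Eball y r) := by
    intro r _
    rw [volume_image_mulVec_add, hdet, abs_of_nonneg (det_R3_div_nonneg A Q B hT hR3 hτ)]
  refine ⟨hvolume, ?_, fun hτ0 => det_R3_div_pos A Q B hR3 ⟨hτ0, hτ.2⟩, ?_⟩
  · refine limsup_div_eq_of_eventually_eq_mul ?_
    filter_upwards [self_mem_nhdsWithin] with r (hr : 0 < r)
    exact ⟨hvolume r hr, (volume_Eball_pos y hr).ne', (volume_Eball_lt_top y hr).ne⟩
  · rw [R3_neg A Q B hQ, R3_neg A Q B hQ, neg_neg, neg_neg, det_transpose, det_transpose]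

/-- Distortion coefficients of the LQ problem: the Lebesgue measure of the set of
`τ`-intermediate points `Z_τ(x, B_r(y))` equals `(det R₃(τ)/det R₃(T))·Leb(B_r(y))`;
hence `β_τ(x,y) = det R₃(τ)/det R₃(T)` is independent of `x, y` and positive for
`τ ∈ (0,T]`, and the backwards problem has the same distortion coefficients. -/
theorem distortion_coefficients
    {n m : ℕ} (hm : 1 ≤ m) (hmn : m ≤ n)
    (A Q : Matrix (Fin n) (Fin n) ℝ) (B : Matrix (Fin n) (Fin m) ℝ)
    (hQ : Q.IsSymm) (hB : B.rank = m)
    (T : ℝ) (hT : 0 < T) (hKal : Kalman A B)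
    (hR3 : ∀ τ ∈ Set.Ioc 0 T, IsUnit (R3 A Q B τ))
    (x y : Fin n → ℝ) (τ : ℝ) (hτ : τ ∈ Set.Icc 0 T) :
    letI Φ : (Fin n → ℝ) → Fin n → ℝ := fun z =>
      (R3 A Q B τ * (R3 A Q B T)⁻¹).mulVec z +
        (R4 A Q B τ - R3 A Q B τ * (R3 A Q B T)⁻¹ * R4 A Q B T).mulVec x
    (∀ r : ℝ, 0 < r →
      volume (Φ '' Eball y r) =
        ENNReal.ofReal ((R3 A Q B τ).det / (R3 A Q B T).det) * volume (Eball y r)) ∧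
    (Filter.limsup (fun r : ℝ => volume (Φ '' Eball y r) / volume (Eball y r))
        (𝓝[>] (0:ℝ)) =
      ENNReal.ofReal ((R3 A Q B τ).det / (R3 A Q B T).det)) ∧
    (0 < τ → 0 < (R3 A Q B τ).det / (R3 A Q B T).det) ∧
    ((-(R3 A Q B (-τ))).det / (-(R3 A Q B (-T))).det
      = (R3 A Q B τ).det / (R3 A Q B T).det) :=
  distortion_coefficients_general A Q B hQ T hT hR3 x y τ hτ

end LQ
end
end

section
/- Riemannian model distortion coefficients via LQ problems: let n ≥ 2 and K ∈ ℝ with K < π². Take A = 0ₙ, B = Iₙ and Q = K·diag(I_{n−1}, 0) (the block-diagonal matrix with identity block of size n−1 and a zero 1×1 block). Then the flow e^{−τΩH} is given explicitly by the block matrix with entries cos(τ√K)I_{n−1}, 1, −√K sin(τ√K)I_{n−1}, 0, (sin(τ√K)/√K)I_{n−1}, τ, cos(τ√K)I_{n−1}, 1 in the appropriate positions (with the conventions sin(τ√K)/√K = τ for K = 0 and hyperbolic functions for K < 0); consequently R₃(τ) = diag((sin(τ√K)/√K)I_{n−1}, τ), R₃(τ) is invertible for all τ ∈ (0,1], and for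 every τ ∈ [0,1] the distortion coefficient β_τ = det R₃(τ)/det R₃(1) equals τ·(sin(τ√K)/sin(√K))^{n−1} if K > 0, τⁿ if K = 0, and τ·(sinh(τ√(−K))/sinh(√(−K)))^{n−1} if K < 0. -/
/-!
With `A = 0` and `B = 1` the generator `-τΩH` has blocks `0, -τQ, τ, 0`. For diagonal
`Q = diag q`, interleaving the two copies of the coordinates makes it block diagonal with
`2 × 2` blocks `τ Nᵢ`, `Nᵢ = !![0, -qᵢ; 1, 0]`. Since `Nᵢ² = -qᵢ`, each block exponentiates by
Euler's formula `exp (t N) = cK q t • 1 + sK q t • N`, valid in any Banach algebra because both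
sides solve `X' = X N`, `X 0 = 1`. Hence `R₃(τ) = diag (sK K τ, …, sK K τ, τ)`, with determinant
`sK K τ ^ (n - 1) * τ`, which is positive on `(0, 1]` because `τ √K < π`.
-/

open Matrix MeasureTheory Filter Topology

noncomputable section

namespace LQ

variable {n m : ℕ}

/-- `sin(τ√K)/√K` (with the conventions `τ` for `K = 0` and hyperbolic functions for `K < 0`). -/
def sK (K τ : ℝ) : ℝ :=
  if 0 < K then Real.sin (τ * Real.sqrt K) / Real.sqrt K
  else if K = 0 then τ
  else Real.sinh (τ * Real.sqrt (-K)) / Real.sqrt (-K)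

/-- `cos(τ√K)` (with the conventions `1` for `K = 0` and hyperbolic functions for `K < 0`). -/
def cK (K τ : ℝ) : ℝ :=
  if 0 < K then Real.cos (τ * Real.sqrt K)
  else if K = 0 then 1
  else Real.cosh (τ * Real.sqrt (-K))

lemma sK_zero_left (τ : ℝ) : sK 0 τ = τ := by simp [sK]

lemma cK_zero_left (τ : ℝ) : cK 0 τ = 1 := by simp [cK]

lemma sK_zero_right (K : ℝ) : sK K 0 = 0 := by unfold sK; split_ifs <;> simp

lemma cK_zero_right (K : ℝ) : cK K 0 = 1 := by unfold cK; split_ifs <;> simp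

lemma hasDerivAt_sK (K τ : ℝ) : HasDerivAt (sK K) (cK K τ) τ := by
  rcases lt_trichotomy K 0 with hK | rfl | hK
  · have hs : Real.sqrt (-K) ≠ 0 := (Real.sqrt_pos.2 (neg_pos.2 hK)).ne'
    have h := ((hasDerivAt_mul_const (x := τ) (Real.sqrt (-K))).sinh).div_const (Real.sqrt (-K))
    rw [mul_div_cancel_right₀ _ hs] at h
    rwa [show sK K = _ from funext fun t => (if_neg hK.not_gt).trans (if_neg hK.ne), cK,
      if_neg hK.not_gt, if_neg hK.ne]
  · rw [show sK 0 = id from funext sK_zero_left, cK_zero_left]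
    exact hasDerivAt_id τ
  · have hs : Real.sqrt K ≠ 0 := (Real.sqrt_pos.2 hK).ne'
    have h := ((hasDerivAt_mul_const (x := τ) (Real.sqrt K)).sin).div_const (Real.sqrt K)
    rw [mul_div_cancel_right₀ _ hs] at h
    rwa [show sK K = _ from funext fun t => if_pos hK, cK, if_pos hK]

lemma hasDerivAt_cK (K τ : ℝ) : HasDerivAt (cK K) (-K * sK K τ) τ := by
  rcases lt_trichotomy K 0 with hK | rfl | hK
  · have hs : Real.sqrt (-K) ≠ 0 := (Real.sqrt_pos.2 (neg_pos.2 hK)).ne'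
    have h := (hasDerivAt_mul_const (x := τ) (Real.sqrt (-K))).cosh
    rw [show cK K = _ from funext fun t => (if_neg hK.not_gt).trans (if_neg hK.ne), sK,
      if_neg hK.not_gt, if_neg hK.ne]
    convert h using 1
    field_simp
    simp [Real.sq_sqrt (neg_nonneg.2 hK.le)]
  · rw [show cK 0 = fun _ => 1 from funext cK_zero_left, neg_zero, zero_mul]
    exact hasDerivAt_const τ 1
  · have hs : Real.sqrt K ≠ 0 := (Real.sqrt_pos.2 hK).ne'
    have h := (hasDerivAt_mul_const (x := τ) (Real.sqrt K)).cos
    rw [show cK K = _ from funext fun t => if_pos hK, sK, if_pos hK]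
    convert h using 1
    field_simp
    simp [Real.sq_sqrt hK.le]

theorem sK_pos {K τ : ℝ} (hK : K < Real.pi ^ 2) (hτ₀ : 0 < τ) (hτ₁ : τ ≤ 1) : 0 < sK K τ := by
  rcases lt_trichotomy K 0 with hK' | rfl | hK'
  · have hs : 0 < Real.sqrt (-K) := Real.sqrt_pos.2 (neg_pos.2 hK')
    rw [sK, if_neg hK'.not_gt, if_neg hK'.ne]
    exact div_pos (Real.sinh_pos_iff.2 (mul_pos hτ₀ hs)) hs
  · rwa [sK_zero_left]
  · have hs : 0 < Real.sqrt K := Real.sqrt_pos.2 hK'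
    have hlt : Real.sqrt K < Real.pi := (Real.sqrt_lt' Real.pi_pos).2 hK
    rw [sK, if_pos hK']
    exact div_pos (Real.sin_pos_of_pos_of_lt_pi (mul_pos hτ₀ hs) (by nlinarith)) hs

theorem sK_div_sK_one (K τ : ℝ) :
    sK K τ / sK K 1 =
      if 0 < K then Real.sin (τ * Real.sqrt K) / Real.sin (Real.sqrt K)
      else if K = 0 then τ
      else Real.sinh (τ * Real.sqrt (-K)) / Real.sinh (Real.sqrt (-K)) := by
  unfold sK
  split_ifs with hpos hzero
  · rw [one_mul, div_div_div_cancel_right₀ (Real.sqrt_pos.2 hpos).ne']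
  · rw [div_one]
  · rw [one_mul, div_div_div_cancel_right₀
      (Real.sqrt_pos.2 (neg_pos.2 (lt_of_le_of_ne (not_lt.1 hpos) hzero))).ne']

theorem exp_smul_eq_of_mul_self_eq {𝔸 : Type*} [NormedRing 𝔸] [NormedAlgebra ℝ 𝔸]
    [CompleteSpace 𝔸] {N : 𝔸} {K : ℝ} (hN : N * N = -K • 1) (t : ℝ) :
    NormedSpace.exp (t • N) = cK K t • 1 + sK K t • N := by
  have hrhs (s : ℝ) : HasDerivAt (fun s => cK K s • (1 : 𝔸) + sK K s • N)
      ((cK K s • (1 : 𝔸) + sK K s • N) * N) s := by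
    refine (((hasDerivAt_cK K s).smul_const (1 : 𝔸)).add
      ((hasDerivAt_sK K s).smul_const N)).congr_deriv ?_
    rw [add_mul, smul_mul_assoc, smul_mul_assoc, hN, one_mul]
    module
  have hunique := ODE_solution_unique_univ
    (v := fun _ y => (ContinuousLinearMap.mul ℝ 𝔸).flip N y) (s := fun _ => Set.univ)
    (fun _ => ((ContinuousLinearMap.mul ℝ 𝔸).flip N).lipschitz.lipschitzOnWith)
    (fun s => ⟨hasDerivAt_exp_smul_const N s, trivial⟩) (fun s => ⟨hrhs s, trivial⟩)
    (t₀ := 0) (by simp [cK_zero_right, sK_zero_right])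
  exact congrFun hunique t

def finTwoProdEquivSum (n : ℕ) : Fin 2 × Fin n ≃ Fin n ⊕ Fin n :=
  (finTwoEquiv.prodCongr (Equiv.refl _)).trans (Equiv.boolProdEquivSum _)

theorem fromBlocks_diagonal_eq_reindex_blockDiagonal {α : Type*} [Zero α]
    (v : Fin n → Matrix (Fin 2) (Fin 2) α) :
    fromBlocks (diagonal fun i => v i 0 0) (diagonal fun i => v i 0 1)
        (diagonal fun i => v i 1 0) (diagonal fun i => v i 1 1) =
      reindex (finTwoProdEquivSum n) (finTwoProdEquivSum n) (blockDiagonal v) := by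
  ext (i | i) (j | j) <;> simp [finTwoProdEquivSum, blockDiagonal_apply, diagonal_apply] <;> rfl

section MatrixExp

attribute [local instance] Matrix.linftyOpNormedRing Matrix.linftyOpNormedAlgebra

theorem exp_reindex {ι κ : Type*} [Fintype ι] [DecidableEq ι] [Fintype κ] [DecidableEq κ]
    (e : ι ≃ κ) (A : Matrix ι ι ℝ) :
    NormedSpace.exp (reindex e e A) = reindex e e (NormedSpace.exp A) :=
  (NormedSpace.map_exp (reindexAlgEquiv ℝ ℝ e) (continuous_id.matrix_reindex e e) A).symm

theorem exp_blockDiagonal_smul_fin_two (q : Fin n → ℝ) (t : ℝ) :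
    NormedSpace.exp (blockDiagonal fun i => t • !![0, -q i; 1, 0]) =
      blockDiagonal fun i => !![cK (q i) t, -q i * sK (q i) t; sK (q i) t, cK (q i) t] := by
  rw [exp_blockDiagonal]
  congr 1
  ext1 i
  -- the topology of the product type here is not syntactically the one of `Pi.normedRing`
  erw [Pi.coe_exp]
  rw [exp_smul_eq_of_mul_self_eq (K := q i)]
  · ext a b; fin_cases a <;> fin_cases b <;> simp [mul_comm]
  · ext a b; fin_cases a <;> fin_cases b <;> simp

end MatrixExp

theorem flow_zero_diagonal_one (q : Fin n → ℝ) (τ : ℝ) :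
    flow 0 (diagonal q) (1 : Matrix (Fin n) (Fin n) ℝ) τ =
      fromBlocks (diagonal fun i => cK (q i) τ) (diagonal fun i => -q i * sK (q i) τ)
        (diagonal fun i => sK (q i) τ) (diagonal fun i => cK (q i) τ) := by
  have hgen : (-τ) • (Om n * Ham 0 (diagonal q) (1 : Matrix (Fin n) (Fin n) ℝ)) =
      reindex (finTwoProdEquivSum n) (finTwoProdEquivSum n)
        (blockDiagonal fun i => τ • !![0, -q i; 1, 0]) := by
    rw [← fromBlocks_diagonal_eq_reindex_blockDiagonal]
    simp only [Om, Ham, fromBlocks_multiply, fromBlocks_smul]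
    ext (i | i) (j | j) <;> by_cases h : i = j <;> simp [h]
  rw [flow, hgen, exp_reindex, exp_blockDiagonal_smul_fin_two,
    ← fromBlocks_diagonal_eq_reindex_blockDiagonal]
  simp

theorem flow_zero_smul_diagonal_indicator (p : Fin n → Prop) [DecidablePred p] (K τ : ℝ) :
    flow 0 (K • diagonal fun i => if p i then (1 : ℝ) else 0) (1 : Matrix (Fin n) (Fin n) ℝ) τ =
      fromBlocks (diagonal fun i => if p i then cK K τ else 1)
        (diagonal fun i => if p i then -K * sK K τ else 0)
        (diagonal fun i => if p i then sK K τ else τ)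
        (diagonal fun i => if p i then cK K τ else 1) := by
  have hQ : (K • diagonal fun i => if p i then (1 : ℝ) else 0) =
      diagonal fun i => if p i then K else 0 := by
    rw [← diagonal_smul]
    congr with i
    by_cases h : p i <;> simp [h]
  rw [hQ, flow_zero_diagonal_one]
  congr 2 <;> ext i <;> split_ifs <;> simp [sK_zero_left, cK_zero_left]

theorem det_diagonal_ite_lt_sub_one {R : Type*} [CommRing R] (hn : n ≠ 0) (a b : R) :
    (diagonal fun i : Fin n => if (i : ℕ) < n - 1 then a else b).det = a ^ (n - 1) * b := by
  obtain ⟨m, rfl⟩ := Nat.exists_eq_succ_of_ne_zero hn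
  simp [det_diagonal, Fin.prod_univ_castSucc]

/-- Riemannian model distortion coefficients via LQ problems: for `A = 0`, `B = Iₙ` and
`Q = K·diag(I_{n−1},0)`, the Hamiltonian flow is explicit, `R₃(τ)` is invertible on
`(0,1]`, and the distortion coefficients `β_τ = det R₃(τ)/det R₃(1)` are the model
Riemannian coefficients. -/
theorem riemannian_model_distortion
    {n : ℕ} (hn : 2 ≤ n) (K : ℝ) (hK : K < Real.pi ^ 2) :
    letI A : Matrix (Fin n) (Fin n) ℝ := 0
    letI B : Matrix (Fin n) (Fin n) ℝ := 1
    letI Qm : Matrix (Fin n) (Fin n) ℝ :=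
      K • Matrix.diagonal (fun i : Fin n => if (i : ℕ) < n - 1 then (1:ℝ) else 0)
    (∀ τ : ℝ,
      R1 A Qm B τ =
        Matrix.diagonal (fun i : Fin n => if (i : ℕ) < n - 1 then cK K τ else 1) ∧
      R2 A Qm B τ =
        Matrix.diagonal (fun i : Fin n => if (i : ℕ) < n - 1 then -K * sK K τ else 0) ∧
      R3 A Qm B τ =
        Matrix.diagonal (fun i : Fin n => if (i : ℕ) < n - 1 then sK K τ else τ) ∧
      R4 A Qm B τ =
        Matrix.diagonal (fun i : Fin n => if (i : ℕ) < n - 1 then cK K τ else 1)) ∧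
    (∀ τ ∈ Set.Ioc (0:ℝ) 1, IsUnit (R3 A Qm B τ)) ∧
    (∀ τ ∈ Set.Icc (0:ℝ) 1,
      (R3 A Qm B τ).det / (R3 A Qm B 1).det =
        if 0 < K then
          τ * (Real.sin (τ * Real.sqrt K) / Real.sin (Real.sqrt K)) ^ (n - 1)
        else if K = 0 then τ ^ n
        else τ * (Real.sinh (τ * Real.sqrt (-K)) / Real.sinh (Real.sqrt (-K))) ^ (n - 1)) := by
  have hflow := flow_zero_smul_diagonal_indicator (fun i : Fin n => (i : ℕ) < n - 1) K
  set Qm : Matrix (Fin n) (Fin n) ℝ :=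
    K • diagonal fun i : Fin n => if (i : ℕ) < n - 1 then (1 : ℝ) else 0
  set B : Matrix (Fin n) (Fin n) ℝ := 1
  have hdet (τ : ℝ) : (R3 0 Qm B τ).det = sK K τ ^ (n - 1) * τ := by
    rw [R3, hflow, toBlocks_fromBlocks₂₁, det_diagonal_ite_lt_sub_one (by omega)]
  refine ⟨fun τ => ?_, fun τ hτ => ?_, fun τ _ => ?_⟩
  · simp only [R1, R2, R3, R4, hflow, toBlocks_fromBlocks₁₁, toBlocks_fromBlocks₁₂,
      toBlocks_fromBlocks₂₁, toBlocks_fromBlocks₂₂, and_self]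
  · rw [isUnit_iff_isUnit_det, hdet, isUnit_iff_ne_zero]
    exact (mul_pos (pow_pos (sK_pos hK hτ.1 hτ.2) _) hτ.1).ne'
  · calc (R3 0 Qm B τ).det / (R3 0 Qm B 1).det = τ * (sK K τ / sK K 1) ^ (n - 1) := by
          rw [hdet, hdet, div_pow]; ring
      _ = _ := by
          rw [sK_div_sK_one]
          split_ifs
          · rfl
          · rw [← pow_succ', Nat.sub_add_cancel (by omega)]
          · rfl

end LQ
end
end
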